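/- Let k ≥ 0 and let ⪅ᵏ be the transitive closure of the word relation u B C A D v ⪅ᵏ u A D B C v, allowed whenever the prefix u has length in k + 2ℕ and A < B < C < D. Then ⪅ᵏ is a graded partial order on any set of words of fixed length n that is closed under it, with rank function given by the number of inversions among the letters in positions k+2, k+4, k+6, … -/

import Mathlib

/-- One step of the word relation `⪅ᵏ`: replace a consecutive subword
`B, C, A, D` starting after a prefix of length in `k + 2ℕ` by `A, D, B, C`,
where `A < B < C < D`. -/
def PrecApproxStep (k : ℕ) (x y : List ℤ) : Prop :=
  ∃ u v : List ℤ, ∃ A B C D : ℤ, A < B ∧ B < C ∧ C < D ∧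
    (∃ j : ℕ, u.length = k + 2 * j) ∧
    x = u ++ [B, C, A, D] ++ v ∧ y = u ++ [A, D, B, C] ++ v

/-- The number of inversions of a word. -/
def linv (l : List ℤ) : ℕ :=
  ((Finset.range l.length ×ˢ Finset.range l.length).filter
    (fun p => p.1 < p.2 ∧ l.getD p.2 0 < l.getD p.1 0)).card

/-- The subword of `w` consisting of the letters in positions
`k+2, k+4, k+6, …` (1-indexed), i.e. 0-indexed positions `k+1, k+3, …`. -/
def evenTail (k : ℕ) (w : List ℤ) : List ℤ :=
  (((List.range w.length).filter
    (fun i => decide (k + 1 ≤ i ∧ (i - (k + 1)) % 2 = 0))).map (fun i => w.getD i 0))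

/-- The rank of a word: the number of inversions among the letters in
positions `k+2, k+4, k+6, …`. -/
def rank18 (k : ℕ) (w : List ℤ) : ℕ := linv (evenTail k w)

/-!
In a move `u B C A D v ↦ u A D B C v` with `|u| = k + 2j`, the ranked (0-indexed) positions
`k + 1, k + 3, …` meet the block only at offsets `1` and `3`, holding the `j`-th and
`(j+1)`-st letters `C, D` of the ranked subword. The move turns them into `D, C` and fixes every
other ranked letter, so on the ranked subword it is an adjacent transposition of an ascent and
creates exactly one inversion. The rank therefore increases strictly along every nontrivial
chain of moves, which gives antisymmetry.
-/

open Finset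

def inversions (l : List ℤ) : Finset (ℕ × ℕ) :=
  (range l.length ×ˢ range l.length).filter (fun p => p.1 < p.2 ∧ l.getD p.2 0 < l.getD p.1 0)

theorem linv_eq_card_inversions (l : List ℤ) : linv l = (inversions l).card := rfl

theorem mem_inversions {l : List ℤ} {a b : ℕ} :
    (a, b) ∈ inversions l ↔
      a < l.length ∧ b < l.length ∧ a < b ∧ l.getD b 0 < l.getD a 0 := by
  simp [inversions, and_assoc]

section AdjacentSwap

variable {t a b : ℕ}

theorem swap_succ_apply_lt_iff (n : ℕ) (ht : t + 1 < n) :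
    Equiv.swap t (t + 1) a < n ↔ a < n := by
  simp only [Equiv.swap_apply_def]
  split_ifs <;> omega

theorem swap_succ_apply_lt_swap_succ_apply_iff (h : ¬(a = t ∧ b = t + 1)) (h' : ¬(a = t + 1 ∧ b = t)) :
    Equiv.swap t (t + 1) a < Equiv.swap t (t + 1) b ↔ a < b := by
  simp only [Equiv.swap_apply_def]
  split_ifs <;> omega

/-- Apart from the new inversion `(t, t + 1)`, the transposition maps the inversions of `l₁`
bijectively onto those of `l₂`. -/
theorem linv_eq_succ_of_swap_ascent {l₁ l₂ : List ℤ} (hlen : l₂.length = l₁.length)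
    (ht : t + 1 < l₁.length)
    (hval : ∀ i, l₂.getD i 0 = l₁.getD (Equiv.swap t (t + 1) i) 0)
    (hlt : l₁.getD t 0 < l₁.getD (t + 1) 0) :
    linv l₂ = linv l₁ + 1 := by
  set σ := Equiv.swap t (t + 1) with hσ
  have hmap : ∀ p : ℕ × ℕ, p ∈ (inversions l₁).map (σ.prodCongr σ).toEmbedding ↔
      (σ p.1, σ p.2) ∈ inversions l₁ := fun p => by
    rw [Finset.mem_map_equiv, Equiv.prodCongr_symm, Equiv.symm_swap]
    rfl
  have hnot : (t, t + 1) ∉ (inversions l₁).map (σ.prodCongr σ).toEmbedding := by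
    simp [hσ, mem_inversions]
  have key : inversions l₂ =
      insert (t, t + 1) ((inversions l₁).map (σ.prodCongr σ).toEmbedding) := by
    ext ⟨a, b⟩
    rw [Finset.mem_insert, hmap, mem_inversions, mem_inversions, hlen, hval a, hval b,
      Prod.mk.injEq]
    by_cases hab : a = t ∧ b = t + 1
    · obtain ⟨rfl, rfl⟩ := hab
      simp only [hσ, Equiv.swap_apply_left, Equiv.swap_apply_right]
      exact iff_of_true ⟨by omega, ht, by omega, hlt⟩ (Or.inl (by simp))
    by_cases hba : a = t + 1 ∧ b = t
    · obtain ⟨rfl, rfl⟩ := hba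
      simp only [hσ, Equiv.swap_apply_left, Equiv.swap_apply_right]
      refine iff_of_false (fun h => absurd h.2.2.1 (by omega)) ?_
      rintro (h | ⟨-, -, -, h⟩)
      · omega
      · exact hlt.not_gt h
    rw [swap_succ_apply_lt_iff _ ht, swap_succ_apply_lt_iff _ ht,
      swap_succ_apply_lt_swap_succ_apply_iff hab hba]
    simp [hab]
  rw [linv_eq_card_inversions, linv_eq_card_inversions, key, card_insert_of_notMem hnot,
    card_map]

end AdjacentSwap

theorem filter_range_rankPositions (k L : ℕ) :
    (List.range L).filter (fun i => decide (k + 1 ≤ i ∧ (i - (k + 1)) % 2 = 0)) =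
      (List.range ((L - k) / 2)).map (fun m => k + 1 + 2 * m) := by
  induction L with
  | zero => simp
  | succ L ih =>
    rw [List.range_succ, List.filter_append, ih]
    by_cases hP : k + 1 ≤ L ∧ (L - (k + 1)) % 2 = 0
    · rw [show (L + 1 - k) / 2 = (L - k) / 2 + 1 by omega, List.range_succ, List.map_append]
      simp [hP.2, show k < L by omega, show k + 1 + 2 * ((L - k) / 2) = L by omega]
    · rw [show (L + 1 - k) / 2 = (L - k) / 2 by omega, List.filter_singleton,
        decide_eq_false hP]
      simp

theorem evenTail_eq_map_range (k : ℕ) (w : List ℤ) :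
    evenTail k w = (List.range ((w.length - k) / 2)).map (fun m => w.getD (k + 1 + 2 * m) 0) := by
  rw [evenTail, filter_range_rankPositions, List.map_map]
  rfl

theorem length_evenTail (k : ℕ) (w : List ℤ) : (evenTail k w).length = (w.length - k) / 2 := by
  simp [evenTail_eq_map_range]

theorem getD_evenTail (k : ℕ) (w : List ℤ) (m : ℕ) :
    (evenTail k w).getD m 0 = if m < (w.length - k) / 2 then w.getD (k + 1 + 2 * m) 0 else 0 := by
  split_ifs with h
  · rw [List.getD_eq_getElem _ _ (by rwa [length_evenTail])]
    simp [evenTail_eq_map_range]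
  · exact List.getD_eq_default _ _ (by rw [length_evenTail]; omega)

theorem getD_append_four (u v : List ℤ) (a b c d : ℤ) (p : ℕ) :
    (u ++ [a, b, c, d] ++ v).getD p 0 =
      if p < u.length then u.getD p 0
      else if p = u.length then a else if p = u.length + 1 then b
      else if p = u.length + 2 then c else if p = u.length + 3 then d
      else v.getD (p - u.length - 4) 0 := by
  rw [List.append_assoc]
  by_cases h : p < u.length
  · rw [if_pos h, List.getD_append _ _ _ _ h]
  rw [if_neg h, List.getD_append_right _ _ _ _ (by omega)]
  obtain ⟨q, hq⟩ : ∃ q, p = u.length + q := ⟨p - u.length, by omega⟩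
  subst hq
  rcases q with _ | _ | _ | _ | q <;> simp_all

theorem getD_rankPosition_step (u v : List ℤ) (A B C D : ℤ) {k j : ℕ}
    (hu : u.length = k + 2 * j) (i : ℕ) :
    (u ++ [A, D, B, C] ++ v).getD (k + 1 + 2 * i) 0 =
      (u ++ [B, C, A, D] ++ v).getD (k + 1 + 2 * Equiv.swap j (j + 1) i) 0 := by
  rw [Equiv.swap_apply_def]
  split_ifs <;> simp only [getD_append_four, hu] <;> split_ifs <;> omega

theorem rank18_of_step {k : ℕ} {x y : List ℤ} (h : PrecApproxStep k x y) :
    rank18 k y = rank18 k x + 1 := by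
  obtain ⟨u, v, A, B, C, D, -, -, hCD, ⟨j, hu⟩, rfl, rfl⟩ := h
  have hlen : (u ++ [A, D, B, C] ++ v).length = (u ++ [B, C, A, D] ++ v).length := by simp
  have hj : j + 1 < ((u ++ [B, C, A, D] ++ v).length - k) / 2 := by
    simp only [List.length_append, List.length_cons, List.length_nil]
    omega
  refine linv_eq_succ_of_swap_ascent (by rw [length_evenTail, length_evenTail, hlen])
    (by rwa [length_evenTail]) (fun i => ?_) ?_
  · simp only [getD_evenTail, hlen, getD_rankPosition_step u v A B C D hu,
      swap_succ_apply_lt_iff _ hj]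
  · rw [getD_evenTail, getD_evenTail, if_pos (by omega), if_pos hj, getD_append_four,
      getD_append_four]
    simp only [hu]
    split_ifs <;> omega

theorem rank18_lt_of_transGen {k : ℕ} {x y : List ℤ}
    (h : Relation.TransGen (PrecApproxStep k) x y) : rank18 k x < rank18 k y := by
  induction h with
  | single hxy => rw [rank18_of_step hxy]; exact Nat.lt_succ_self _
  | tail _ hyz ih => rw [rank18_of_step hyz]; exact Nat.lt_succ_of_lt ih

theorem stmt18_general (k : ℕ) (E : Set (List ℤ)) :
    (∀ x ∈ E, ∀ y ∈ E, Relation.ReflTransGen (PrecApproxStep k) x y →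
      Relation.ReflTransGen (PrecApproxStep k) y x → x = y) ∧
    (∀ x ∈ E, ∀ y ∈ E, PrecApproxStep k x y → rank18 k y = rank18 k x + 1) := by
  refine ⟨fun x _ y _ hxy hyx => ?_, fun x _ y _ h => rank18_of_step h⟩
  rcases Relation.reflTransGen_iff_eq_or_transGen.mp hxy with rfl | hxy'
  · rfl
  rcases Relation.reflTransGen_iff_eq_or_transGen.mp hyx with rfl | hyx'
  · rfl
  exact (lt_irrefl _ ((rank18_lt_of_transGen hxy').trans (rank18_lt_of_transGen hyx'))).elim

/-- `⪅ᵏ` is a graded partial order on any set of words of a fixed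
length `n` (with distinct letters) closed under it, with rank function the
number of inversions among the letters in positions `k+2, k+4, k+6, …`:
the relation is antisymmetric, and each covering step raises the rank by one. -/
theorem stmt18 (k n : ℕ) (E : Set (List ℤ))
    (hlen : ∀ w ∈ E, w.length = n) (hnd : ∀ w ∈ E, w.Nodup)
    (hcl : ∀ x y, PrecApproxStep k x y → (x ∈ E ↔ y ∈ E)) :
    (∀ x ∈ E, ∀ y ∈ E, Relation.ReflTransGen (PrecApproxStep k) x y →
      Relation.ReflTransGen (PrecApproxStep k) y x → x = y) ∧
    (∀ x ∈ E, ∀ y ∈ E, PrecApproxStep k x y → rank18 k y = rank18 k x + 1) :=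
  stmt18_general k E
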